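/- arXiv:2308.14932 — 3 statements merged into one kernel-verified Lean document; each statement's English description precedes it below -/
import Mathlib

section
/- Let (R, m, k) be a Noetherian local ring, let s and t be positive integers, and let x ∈ m^t \ m^{t+1} be a nonzerodivisor on R. Suppose that for each i with 1 ≤ i ≤ s the map m^{i-1}/m^i → m^{i+t-1}/m^{i+t} induced by multiplication by x is injective. Then there is an isomorphism of R-modules (m^{s+t-1} + xR)/x m^s ≅ R/m^s ⊕ (m^{s+t-1} + xR)/xR. -/
/-!
Multiplication by `x` induces an injection of `k`-vector spaces
`m^{s-1}/m^s → m^{s+t-1}/m^{s+t}`, which therefore has a left inverse. This gives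
`π : m^{s+t-1} → R/m^s` with `π (r x) = r mod m^s` whenever `r x ∈ m^{s+t-1}` (iterating the
injectivity hypothesis shows that such `r` lie in `m^{s-1}`). Hence `π` and `r x ↦ r mod m^s` glue
to `φ : I → R/m^s`, and `(φ, mod x) : I → R/m^s × I/xR` is surjective with kernel `x m^s`.
-/

open IsLocalRing Submodule

theorem Submodule.exists_comp_eq_mkQ_smul_top {R P M : Type*} [CommRing R]
    [AddCommGroup P] [Module R P] [AddCommGroup M] [Module R M]
    (I : Ideal R) [I.IsMaximal] (i : P →ₗ[R] M)
    (hi : (I • ⊤ : Submodule R M).comap i ≤ I • ⊤) :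
    ∃ π : M →ₗ[R] P ⧸ (I • ⊤ : Submodule R P), π ∘ₗ i = (I • ⊤ : Submodule R P).mkQ := by
  -- `M ⧸ I • ⊤` is a vector space over the field `R ⧸ I`, where injective maps split.
  let := Ideal.Quotient.field I
  have hsurj : Function.Surjective (algebraMap R (R ⧸ I)) := Ideal.Quotient.mk_surjective
  let ī := (mapQ _ _ i (smul_top_le_comap_smul_top I i)).extendScalarsOfSurjective hsurj
  have hī : LinearMap.ker ī = ⊥ := by
    rw [LinearMap.ker_eq_bot']
    intro p hp
    induction p using Quotient.induction_on with | _ p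
    have hip : i p ∈ (I • ⊤ : Submodule R M) := (Quotient.mk_eq_zero _).1 hp
    exact (Quotient.mk_eq_zero _).2 (hi hip)
  obtain ⟨π, hπ⟩ := ī.exists_leftInverse_of_injective hī
  refine ⟨π.restrictScalars R ∘ₗ (I • ⊤ : Submodule R M).mkQ, LinearMap.ext fun p => ?_⟩
  exact LinearMap.congr_fun hπ (Quotient.mk p)

theorem Submodule.exists_linearMap_sup_span_singleton {R M Q : Type*} [CommRing R]
    [AddCommGroup M] [Module R M] [AddCommGroup Q] [Module R Q]
    (N : Submodule R M) (x : M) (π : N →ₗ[R] Q) (g : R →ₗ[R] Q)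
    (h : ∀ r (hr : r • x ∈ N), π ⟨r • x, hr⟩ = g r) :
    ∃ φ : ↥(N ⊔ R ∙ x) →ₗ[R] Q, ∀ r (hr : r • x ∈ N ⊔ R ∙ x), φ ⟨r • x, hr⟩ = g r := by
  let p : N × R →ₗ[R] ↥(N ⊔ R ∙ x) :=
    (N.subtype.coprod (LinearMap.toSpanSingleton R M x)).codRestrict _ fun z =>
      add_mem (mem_sup_left z.1.2) (mem_sup_right (mem_span_singleton.2 ⟨z.2, rfl⟩))
  have hp : Function.Surjective p := by
    rintro ⟨y, hy⟩
    obtain ⟨n, hn, z, hz, rfl⟩ := mem_sup.1 hy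
    obtain ⟨r, rfl⟩ := mem_span_singleton.1 hz
    exact ⟨(⟨n, hn⟩, r), rfl⟩
  have hker : LinearMap.ker p ≤ LinearMap.ker (π.coprod g) := by
    rintro ⟨⟨n, hn⟩, r⟩ hz
    have hnr : n = (-r) • x := by
      have : n + r • x = 0 := congrArg Subtype.val hz
      rw [neg_smul]; exact eq_neg_of_add_eq_zero_left this
    subst hnr
    rw [LinearMap.mem_ker, LinearMap.coprod_apply, h, map_neg, neg_add_cancel]
  refine ⟨(LinearMap.ker p).liftQ _ hker ∘ₗ (p.quotKerEquivOfSurjective hp).symm, fun r hr => ?_⟩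
  have : (⟨r • x, hr⟩ : ↥(N ⊔ R ∙ x)) = p (0, r) := Subtype.ext (zero_add _).symm
  simp [this]

noncomputable def Submodule.quotientInfKerEquivProd {R M Q : Type*} [CommRing R]
    [AddCommGroup M] [Module R M] [AddCommGroup Q] [Module R Q]
    (L : Submodule R M) (φ : M →ₗ[R] Q) (hφ : L.map φ = ⊤) :
    (M ⧸ L ⊓ LinearMap.ker φ) ≃ₗ[R] Q × (M ⧸ L) :=
  have hsurj : Function.Surjective (φ.prod L.mkQ) := by
    rintro ⟨q, y⟩
    obtain ⟨m, rfl⟩ := L.mkQ_surjective y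
    obtain ⟨l, hl, hφl⟩ := (mem_map.1 (hφ.symm ▸ mem_top : q - φ m ∈ L.map φ))
    refine ⟨m + l, Prod.ext (by simp [hφl]) ?_⟩
    simpa using (Quotient.mk_eq_zero L).2 hl
  (quotEquivOfEq _ _ (by rw [LinearMap.ker_prod, ker_mkQ, inf_comm])).trans
    ((φ.prod L.mkQ).quotKerEquivOfSurjective hsurj)

noncomputable def Ideal.quotientSpanSingletonMulEquivProd {R : Type*} [CommRing R]
    {I J : Ideal R} {x : R} (hx : x ∈ I) (φ : I →ₗ[R] R ⧸ J)
    (hφ : ∀ r (hr : r • x ∈ I), φ ⟨r • x, hr⟩ = J.mkQ r) :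
    (I ⧸ Submodule.comap I.subtype (Ideal.span {x} * J)) ≃ₗ[R]
      (R ⧸ J) × (I ⧸ Submodule.comap I.subtype (Ideal.span {x})) :=
  have hker : Submodule.comap I.subtype (Ideal.span {x} * J) =
      Submodule.comap I.subtype (Ideal.span {x}) ⊓ LinearMap.ker φ := by
    ext ⟨a, ha⟩
    simp only [Submodule.mem_inf, Submodule.mem_comap, Submodule.subtype_apply, LinearMap.mem_ker]
    constructor
    · intro hmem
      obtain ⟨r, hr, rfl⟩ := Ideal.mem_span_singleton_mul.1 hmem
      refine ⟨Ideal.mul_mem_right r _ (Ideal.mem_span_singleton_self x), ?_⟩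
      rw [show (⟨x * r, ha⟩ : I) = ⟨r • x, I.smul_mem r hx⟩ from Subtype.ext (mul_comm x r), hφ,
        mkQ_apply, Submodule.Quotient.mk_eq_zero]
      exact hr
    · rintro ⟨hmem, hφa⟩
      obtain ⟨r, rfl⟩ := Ideal.mem_span_singleton'.1 hmem
      have hr : r ∈ J := (Submodule.Quotient.mk_eq_zero J).1 ((hφ r ha).symm.trans hφa)
      exact mul_comm x r ▸ Ideal.mul_mem_mul (Ideal.mem_span_singleton_self x) hr
  have hmap : (Submodule.comap I.subtype (Ideal.span {x})).map φ = ⊤ := by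
    refine eq_top_iff.2 fun q _ => ?_
    obtain ⟨r, rfl⟩ := J.mkQ_surjective q
    exact ⟨⟨r • x, I.smul_mem r hx⟩, Ideal.mul_mem_left _ r (Ideal.mem_span_singleton_self x),
      hφ r _⟩
  (Submodule.quotEquivOfEq _ _ hker).trans (Submodule.quotientInfKerEquivProd _ φ hmap)

theorem Ideal.mem_pow_of_mul_mem_pow {R : Type*} [CommRing R] {m : Ideal R} {x : R} {s t : ℕ}
    (hinj : ∀ i : ℕ, 1 ≤ i → i ≤ s → ∀ r ∈ m ^ (i - 1), x * r ∈ m ^ (i + t) → r ∈ m ^ i)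
    {j : ℕ} (hj : j ≤ s) {u : R} (hu : x * u ∈ m ^ (j + t)) : u ∈ m ^ j := by
  induction j with
  | zero => simp
  | succ j ih =>
    have hu' : u ∈ m ^ j := ih (by omega) (Ideal.pow_le_pow_right (by omega) hu)
    exact hinj (j + 1) (by omega) hj u hu' hu

theorem Ideal.exists_linearMap_pow_apply_smul {R : Type*} [CommRing R] {m : Ideal R}
    [m.IsMaximal] {x : R} {s t : ℕ} (hs : 0 < s) (hxt : x ∈ m ^ t)
    (hinj : ∀ i : ℕ, 1 ≤ i → i ≤ s → ∀ r ∈ m ^ (i - 1), x * r ∈ m ^ (i + t) → r ∈ m ^ i) :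
    ∃ π : ↥(m ^ (s + t - 1)) →ₗ[R] R ⧸ m ^ s,
      ∀ r (hr : r • x ∈ m ^ (s + t - 1)), π ⟨r • x, hr⟩ = (m ^ s).mkQ r := by
  have hpow (n : ℕ) (hn : 0 < n) : m • m ^ (n - 1) = m ^ n := by
    rw [Ideal.smul_eq_mul, ← pow_succ', Nat.sub_add_cancel hn]
  let i : ↥(m ^ (s - 1)) →ₗ[R] ↥(m ^ (s + t - 1)) :=
    (LinearMap.mulLeft R x).restrict fun u hu => by
      simpa [← pow_add, show t + (s - 1) = s + t - 1 by omega] using Ideal.mul_mem_mul hxt hu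
  obtain ⟨π₀, hπ₀⟩ := Submodule.exists_comp_eq_mkQ_smul_top m i <| by
    intro u hu
    rw [Submodule.mem_comap, mem_smul_top_iff, hpow _ (by omega)] at hu
    rw [mem_smul_top_iff, hpow _ hs]
    exact mem_pow_of_mul_mem_pow hinj le_rfl hu
  let ι := (m • ⊤ : Submodule R ↥(m ^ (s - 1))).mapQ (m ^ s) (m ^ (s - 1)).subtype fun u hu => by
    rwa [mem_smul_top_iff, hpow _ hs] at hu
  refine ⟨ι ∘ₗ π₀, fun r hr => ?_⟩
  have hr' : r ∈ m ^ (s - 1) :=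
    mem_pow_of_mul_mem_pow hinj (by omega) (by rwa [show s - 1 + t = s + t - 1 by omega, mul_comm])
  have hi : (⟨r • x, hr⟩ : ↥(m ^ (s + t - 1))) = i ⟨r, hr'⟩ := Subtype.ext (mul_comm r x)
  rw [hi, LinearMap.comp_apply, ← LinearMap.comp_apply π₀, hπ₀]
  rfl

theorem stmt_0_general {R : Type*} [CommRing R] [IsLocalRing R]
    (s t : ℕ) (hs : 0 < s) (x : R)
    (hxt : x ∈ maximalIdeal R ^ t)
    (hinj : ∀ i : ℕ, 1 ≤ i → i ≤ s → ∀ r ∈ maximalIdeal R ^ (i - 1),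
      x * r ∈ maximalIdeal R ^ (i + t) → r ∈ maximalIdeal R ^ i)
    (I : Ideal R) (hI : I = maximalIdeal R ^ (s + t - 1) ⊔ Ideal.span {x}) :
    Nonempty
      ((↥I ⧸ Submodule.comap I.subtype (Ideal.span {x} * maximalIdeal R ^ s)) ≃ₗ[R]
        (R ⧸ maximalIdeal R ^ s) ×
          (↥I ⧸ Submodule.comap I.subtype (Ideal.span {x}))) := by
  subst hI
  obtain ⟨π, hπ⟩ := Ideal.exists_linearMap_pow_apply_smul hs hxt hinj
  obtain ⟨φ, hφ⟩ := exists_linearMap_sup_span_singleton _ x π _ hπ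
  exact ⟨Ideal.quotientSpanSingletonMulEquivProd
    (mem_sup_right (Ideal.mem_span_singleton_self x)) φ hφ⟩

/-- Let `(R, m, k)` be a Noetherian local ring, `s, t` positive integers,
`x ∈ m^t \ m^{t+1}` a nonzerodivisor on `R`.  Suppose that for each `1 ≤ i ≤ s` the map
`m^{i-1}/m^i → m^{i+t-1}/m^{i+t}` induced by multiplication by `x` is injective
(encoded elementwise: if `r ∈ m^{i-1}` and `x*r ∈ m^{i+t}` then `r ∈ m^i`).  Then
`(m^{s+t-1} + xR)/(x·m^s) ≅ R/m^s ⊕ (m^{s+t-1} + xR)/(xR)` as `R`-modules. -/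
theorem stmt_0 {R : Type*} [CommRing R] [IsLocalRing R] [IsNoetherianRing R]
    (s t : ℕ) (hs : 0 < s) (ht : 0 < t) (x : R)
    (hxt : x ∈ maximalIdeal R ^ t) (hxt' : x ∉ maximalIdeal R ^ (t + 1))
    (hxreg : x ∈ nonZeroDivisors R)
    (hinj : ∀ i : ℕ, 1 ≤ i → i ≤ s → ∀ r ∈ maximalIdeal R ^ (i - 1),
      x * r ∈ maximalIdeal R ^ (i + t) → r ∈ maximalIdeal R ^ i)
    (I : Ideal R) (hI : I = maximalIdeal R ^ (s + t - 1) ⊔ Ideal.span {x}) :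
    Nonempty
      ((↥I ⧸ Submodule.comap I.subtype (Ideal.span {x} * maximalIdeal R ^ s)) ≃ₗ[R]
        (R ⧸ maximalIdeal R ^ s) ×
          (↥I ⧸ Submodule.comap I.subtype (Ideal.span {x}))) :=
  stmt_0_general s t hs x hxt hinj I hI
end

section
/- Let (R, m) be a Noetherian local ring, I ⊆ R an ideal, and x, y ∈ m elements such that the ideal I + xR equals the principal ideal (y). If I is not a principal ideal, then (x) = (y). -/
open IsLocalRing

/-- Writing `x = y a` and `y = i + r x` with `i ∈ I` gives `y (1 - a r) = i ∈ I`; in a local ring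
either `a r` is a unit, so that `a` is one, or `1 - a r` is a unit, so that `y ∈ I`. -/
theorem Ideal.eq_span_singleton_or_span_singleton_eq_of_sup_eq {R : Type*} [CommRing R]
    [IsLocalRing R] {I : Ideal R} {x y : R} (h : I ⊔ Ideal.span {x} = Ideal.span {y}) :
    I = Ideal.span {y} ∨ Ideal.span {x} = Ideal.span {y} := by
  obtain ⟨a, rfl⟩ : y ∣ x :=
    Ideal.mem_span_singleton.mp (h ▸ Ideal.mem_sup_right (Ideal.mem_span_singleton_self x))
  obtain ⟨i, hiI, _, hrx, hy⟩ :=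
    Submodule.mem_sup.mp (h ▸ Ideal.mem_span_singleton_self y : y ∈ I ⊔ Ideal.span {y * a})
  obtain ⟨r, rfl⟩ := Ideal.mem_span_singleton.mp hrx
  have hyI : y * (1 - a * r) ∈ I := by
    convert hiI using 1
    linear_combination -hy
  rcases isUnit_or_isUnit_one_sub_self (a * r) with har | har
  · exact Or.inr (Ideal.span_singleton_mul_right_unit (isUnit_of_mul_isUnit_left har) y)
  · refine Or.inl (le_antisymm (h ▸ le_sup_left) ?_)
    exact Ideal.span_singleton_le_iff_mem I |>.mpr ((Ideal.mul_unit_mem_iff_mem I har).mp hyI)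

theorem stmt_1_general {R : Type*} [CommRing R] [IsLocalRing R]
    (I : Ideal R) (x y : R)
    (hxy : I ⊔ Ideal.span {x} = Ideal.span {y})
    (hI : ¬ I.IsPrincipal) :
    Ideal.span {x} = Ideal.span {y} :=
  (Ideal.eq_span_singleton_or_span_singleton_eq_of_sup_eq hxy).resolve_left
    fun hIy ↦ hI ⟨y, hIy⟩

/-- Let `(R, m)` be a Noetherian local ring, `I ⊆ R` an ideal and
`x, y ∈ m` such that `I + xR = (y)`.  If `I` is not principal, then `(x) = (y)`. -/
theorem stmt_1 {R : Type*} [CommRing R] [IsLocalRing R] [IsNoetherianRing R]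
    (I : Ideal R) (x y : R) (hx : x ∈ maximalIdeal R) (hy : y ∈ maximalIdeal R)
    (hxy : I ⊔ Ideal.span {x} = Ideal.span {y})
    (hI : ¬ I.IsPrincipal) :
    Ideal.span {x} = Ideal.span {y} :=
  stmt_1_general I x y hxy hI
end

section
/- Let m, n ≥ 0 be integers and let p > 3 be a prime such that 2 is a primitive root modulo p^2. Then x^2 + xy + y^2 is a nonzerodivisor on the quotient ring F_2[x,y]/( xy(x^{p^m} + y^{p^m})^{2^n} ). -/
/-!
The quadratic `q = x² + xy + y²` is prime in `F₂[x,y]`: as a monic quadratic in `x` over `F₂[y]`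
it specializes at `y = 1` to the irreducible `X² + X + 1` over `F₂`. It does not divide
`f = xy(x^{p^m} + y^{p^m})^{2^n}`, because at `(ω, 1)`, with `ω ∈ F₄` a primitive cube root of
unity, `q` vanishes while `f` does not (`3 ∤ p^m`). Hence `q g ∈ (f)` forces `q ∣ f c`, `q ∣ c`,
and `g ∈ (f)`.
-/

open MvPolynomial

theorem Polynomial.irreducible_X_sq_add_X_add_one :
    Irreducible (Polynomial.X ^ 2 + Polynomial.X + 1 : Polynomial (ZMod 2)) := by
  have hdeg : (Polynomial.X ^ 2 + Polynomial.X + 1 : Polynomial (ZMod 2)).natDegree = 2 := by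
    compute_degree!
  refine Polynomial.irreducible_of_degree_le_three_of_not_isRoot (by simp [hdeg]) ?_
  simp only [Polynomial.IsRoot, Polynomial.eval_add, Polynomial.eval_pow, Polynomial.eval_X,
    Polynomial.eval_one]
  decide

theorem MvPolynomial.prime_X_sq_add_X_mul_X_add_X_sq :
    Prime (X 0 ^ 2 + X 0 * X 1 + X 1 ^ 2 : MvPolynomial (Fin 2) (ZMod 2)) := by
  have himg : finSuccEquiv (ZMod 2) 1 (X 0 ^ 2 + X 0 * X 1 + X 1 ^ 2) =
      Polynomial.X ^ 2 + Polynomial.X * Polynomial.C (X 0) + Polynomial.C (X 0 ^ 2) := by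
    rw [show (X 1 : MvPolynomial (Fin 2) (ZMod 2)) = X (Fin.succ 0) from rfl]
    simp only [map_add, map_mul, map_pow, finSuccEquiv_X_zero, finSuccEquiv_X_succ]
  rw [← MulEquiv.prime_iff (finSuccEquiv (ZMod 2) 1).toMulEquiv]
  change Prime (finSuccEquiv (ZMod 2) 1 _)
  rw [himg, ← irreducible_iff_prime]
  refine Polynomial.Monic.irreducible_of_irreducible_map (MvPolynomial.eval fun _ => 1) _
    (by monicity!) ?_
  simpa using Polynomial.irreducible_X_sq_add_X_add_one

theorem pow_add_one_ne_zero_of_sq_add_add_one_eq_zero {K : Type*} [CommRing K] [Nontrivial K]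
    [CharP K 2] {ω : K} (hω : ω ^ 2 + ω + 1 = 0) {N : ℕ} (hN : ¬ 3 ∣ N) : ω ^ N + 1 ≠ 0 := by
  have hω3 : ω ^ 3 = 1 := by linear_combination (ω - 1) * hω
  have hω1 : ω ≠ 1 := by
    rintro rfl
    exact one_ne_zero (by linear_combination hω - CharTwo.add_self_eq_zero (1 : K))
  intro h
  have : ω ^ N = 1 := by rwa [CharTwo.add_eq_zero] at h
  exact hN (orderOf_eq_prime hω3 hω1 ▸ orderOf_dvd_of_pow_eq_one this)

theorem Ideal.Quotient.mk_mem_nonZeroDivisors_of_prime_of_not_dvd {R : Type*} [CommRing R]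
    [IsDomain R] {q f : R} (hq : Prime q) (hqf : ¬ q ∣ f) :
    Ideal.Quotient.mk (Ideal.span {f}) q ∈ nonZeroDivisors (R ⧸ Ideal.span {f}) := by
  rw [mem_nonZeroDivisors_iff_right]
  intro z hz
  obtain ⟨g, rfl⟩ := Ideal.Quotient.mk_surjective z
  rw [← map_mul, Ideal.Quotient.eq_zero_iff_dvd] at hz
  rw [Ideal.Quotient.eq_zero_iff_dvd]
  obtain ⟨c, hc⟩ := hz
  obtain ⟨c', rfl⟩ := (hq.dvd_or_dvd ⟨g, by rw [← hc, mul_comm]⟩).resolve_left hqf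
  exact ⟨c', mul_right_cancel₀ hq.ne_zero (by rw [hc]; ring)⟩

theorem MvPolynomial.X_sq_add_X_mul_X_add_X_sq_not_dvd {N : ℕ} (hN : ¬ 3 ∣ N) (k : ℕ) :
    ¬ (X 0 ^ 2 + X 0 * X 1 + X 1 ^ 2 : MvPolynomial (Fin 2) (ZMod 2)) ∣
      X 0 * X 1 * (X 0 ^ N + X 1 ^ N) ^ k := by
  let Φ : Polynomial (ZMod 2) := Polynomial.X ^ 2 + Polynomial.X + 1
  have : Fact (Irreducible Φ) := ⟨Polynomial.irreducible_X_sq_add_X_add_one⟩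
  have : CharP (AdjoinRoot Φ) 2 :=
    charP_of_injective_algebraMap (algebraMap (ZMod 2) (AdjoinRoot Φ)).injective 2
  set ω := AdjoinRoot.root Φ
  have hω : ω ^ 2 + ω + 1 = 0 := by simpa [Φ] using AdjoinRoot.eval₂_root Φ
  have hω0 : ω ≠ 0 := by rintro h; simp [h] at hω
  intro hdvd
  have hdvd_eval := map_dvd (aeval ![ω, 1]) hdvd
  simp only [map_add, map_mul, map_pow, aeval_X, Matrix.cons_val_zero, Matrix.cons_val_one,
    Matrix.cons_val_fin_one, mul_one, one_pow, hω, zero_dvd_iff] at hdvd_eval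
  exact mul_ne_zero hω0 (pow_ne_zero _ (pow_add_one_ne_zero_of_sq_add_add_one_eq_zero hω hN))
    hdvd_eval

theorem stmt_11_general (p m n : ℕ) (hp : p.Prime) (hp3 : 3 < p) :
    Ideal.Quotient.mk
        (Ideal.span {(X 0 * X 1 * ((X 0) ^ p ^ m + (X 1) ^ p ^ m) ^ 2 ^ n :
          MvPolynomial (Fin 2) (ZMod 2))})
        ((X 0) ^ 2 + X 0 * X 1 + (X 1) ^ 2) ∈
      nonZeroDivisors
        (MvPolynomial (Fin 2) (ZMod 2) ⧸
          Ideal.span {(X 0 * X 1 * ((X 0) ^ p ^ m + (X 1) ^ p ^ m) ^ 2 ^ n :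
            MvPolynomial (Fin 2) (ZMod 2))}) := by
  have h3 : ¬ 3 ∣ p ^ m := fun h => by
    have := (Nat.prime_dvd_prime_iff_eq Nat.prime_three hp).mp (Nat.prime_three.dvd_of_dvd_pow h)
    omega
  exact Ideal.Quotient.mk_mem_nonZeroDivisors_of_prime_of_not_dvd
    prime_X_sq_add_X_mul_X_add_X_sq (X_sq_add_X_mul_X_add_X_sq_not_dvd h3 _)

/-- Let `m, n ≥ 0` and let `p > 3` be a prime such that `2` is a
primitive root modulo `p²` (encoded: the order of `2` in `ZMod (p²)` is `φ(p²)`).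
Then `x² + xy + y²` is a nonzerodivisor on `F₂[x,y]/(xy(x^{p^m} + y^{p^m})^{2^n})`. -/
theorem stmt_11 (p m n : ℕ) (hp : p.Prime) (hp3 : 3 < p)
    (hroot : orderOf (2 : ZMod (p ^ 2)) = Nat.totient (p ^ 2)) :
    Ideal.Quotient.mk
        (Ideal.span {(X 0 * X 1 * ((X 0) ^ p ^ m + (X 1) ^ p ^ m) ^ 2 ^ n :
          MvPolynomial (Fin 2) (ZMod 2))})
        ((X 0) ^ 2 + X 0 * X 1 + (X 1) ^ 2) ∈
      nonZeroDivisors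
        (MvPolynomial (Fin 2) (ZMod 2) ⧸
          Ideal.span {(X 0 * X 1 * ((X 0) ^ p ^ m + (X 1) ^ p ^ m) ^ 2 ^ n :
            MvPolynomial (Fin 2) (ZMod 2))}) :=
  stmt_11_general p m n hp hp3
end
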